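/- arXiv:math/0103118 — 3 statements merged into one kernel-verified Lean document; each statement's English description precedes it below -/
import Mathlib

section
/- For the European call payoff under a lognormal model, the Black-Scholes call price satisfies c(S₀,K,r,T,σ) = S₀·Φ(d) − K·e^{−rT}·Φ(d − σ√T), where d = (ln(S₀/K) + T(r + σ²/2))/(σ√T) and Φ is the standard normal CDF. That is, if Z is a standard normal random variable and S_T = S₀·exp(rT − σ²T/2 + σ√T·Z), then e^{−rT}·E[(S_T − K)⁺] equals the right-hand side. -/
open MeasureTheory ProbabilityTheory Real Set

/-- Standard normal CDF. -/
noncomputable def Phi (x : ℝ) : ℝ :=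
  ∫ y in Set.Iic x, (Real.sqrt (2 * Real.pi))⁻¹ * Real.exp (-(y ^ 2) / 2)

/-- Standard normal density. -/
noncomputable def phi (y : ℝ) : ℝ := (Real.sqrt (2 * Real.pi))⁻¹ * Real.exp (-(y ^ 2) / 2)

/-- Black-Scholes d value. -/
noncomputable def dBS (S₀ K r T σ : ℝ) : ℝ :=
  (Real.log (S₀ / K) + T * (r + σ ^ 2 / 2)) / (σ * Real.sqrt T)

/-- Black-Scholes call price (closed form). -/
noncomputable def callBS (S₀ K r T σ : ℝ) : ℝ :=
  S₀ * Phi (dBS S₀ K r T σ) - K * Real.exp (-(r * T)) * Phi (dBS S₀ K r T σ - σ * Real.sqrt T)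

/-- Black-Scholes put price (via put-call parity). -/
noncomputable def putBS (S₀ K r T σ : ℝ) : ℝ :=
  callBS S₀ K r T σ - S₀ + K * Real.exp (-(r * T))

/-!
Write `S_T = S₀ e^{m + aZ}` with `a = σ√T` and `m = rT - σ²T/2`. The payoff is positive exactly
on `{Z > -d}` with `d = (log (S₀/K) + m)/a`, and completing the square,
`e^{az} φ(z) = e^{a²/2} φ(z - a)`, turns the `S_T`-part of the expectation into a Gaussian tail
shifted by `a`. Hence `E[(S_T - K)⁺] = S₀ e^{m + a²/2} Φ(d + a) - K Φ(d)`, and `m + a²/2 = rT`.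
-/

lemma gaussianPDFReal_zero_one : gaussianPDFReal 0 1 = phi := by
  ext x
  simp [gaussianPDFReal, phi]

lemma integrable_phi : Integrable phi :=
  gaussianPDFReal_zero_one ▸ integrable_gaussianPDFReal 0 1

lemma integral_gaussianReal_zero_one (f : ℝ → ℝ) :
    ∫ z, f z ∂(gaussianReal 0 1) = ∫ z, phi z * f z := by
  rw [integral_gaussianReal_eq_integral_smul one_ne_zero, gaussianPDFReal_zero_one]
  rfl

lemma integral_Ioi_phi (b : ℝ) : ∫ z in Ioi b, phi z = Phi (-b) := by
  rw [← neg_neg b, ← integral_comp_neg_Iic, neg_neg]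
  simp only [phi, Phi, neg_sq]

lemma integral_Ioi_phi_sub (a b : ℝ) : ∫ z in Ioi b, phi (z - a) = Phi (a - b) := by
  have h := (measurePreserving_sub_right volume a).setIntegral_preimage_emb
    (measurableEmbedding_subRight a) phi (Ioi (b - a))
  rw [preimage_sub_const_Ioi, sub_add_cancel] at h
  rw [h, integral_Ioi_phi, neg_sub]

lemma exp_mul_mul_phi (a z : ℝ) : exp (a * z) * phi z = exp (a ^ 2 / 2) * phi (z - a) := by
  simp only [phi]
  rw [mul_left_comm, ← exp_add, mul_left_comm, ← exp_add]
  ring_nf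

lemma lt_mul_exp_iff {S K a : ℝ} (hS : 0 < S) (hK : 0 < K) (ha : 0 < a) (m z : ℝ) :
    K < S * exp (m + a * z) ↔ -((log (S / K) + m) / a) < z := by
  rw [← div_lt_iff₀' hS, ← log_lt_iff_lt_exp (div_pos hK hS), neg_lt, lt_div_iff₀ ha,
    log_div hK.ne' hS.ne', log_div hS.ne' hK.ne']
  constructor <;> intro h <;> linarith

theorem integral_max_mul_exp_sub_gaussianReal {S K a : ℝ} (hS : 0 < S) (hK : 0 < K)
    (ha : 0 < a) (m : ℝ) :
    ∫ z, max (S * exp (m + a * z) - K) 0 ∂(gaussianReal 0 1) =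
      S * exp (m + a ^ 2 / 2) * Phi ((log (S / K) + m) / a + a) -
        K * Phi ((log (S / K) + m) / a) := by
  set d := (log (S / K) + m) / a
  have h_payoff : ∀ z, phi z * max (S * exp (m + a * z) - K) 0 =
      (Ioi (-d)).indicator (fun z ↦ S * exp (m + a ^ 2 / 2) * phi (z - a) - K * phi z) z := by
    intro z
    by_cases hz : z ∈ Ioi (-d)
    · have h_tilt : exp (m + a * z) * phi z = exp (m + a ^ 2 / 2) * phi (z - a) := by
        rw [exp_add, exp_add, mul_assoc, exp_mul_mul_phi, mul_assoc]
      have h_lt : K < S * exp (m + a * z) := (lt_mul_exp_iff hS hK ha m z).2 hz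
      rw [indicator_of_mem hz, max_eq_left (by linarith), mul_assoc, ← h_tilt]
      ring
    · have h_le : S * exp (m + a * z) ≤ K := not_lt.1 (mt (lt_mul_exp_iff hS hK ha m z).1 hz)
      rw [indicator_of_notMem hz, max_eq_right (by linarith), mul_zero]
  have h_int_shift : Integrable fun z ↦ S * exp (m + a ^ 2 / 2) * phi (z - a) :=
    (integrable_phi.comp_sub_right a).const_mul _
  rw [integral_gaussianReal_zero_one, funext h_payoff, integral_indicator measurableSet_Ioi,
    integral_sub h_int_shift.integrableOn (integrable_phi.const_mul K).integrableOn,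
    integral_const_mul, integral_const_mul, integral_Ioi_phi_sub, integral_Ioi_phi, sub_neg_eq_add,
    add_comm a, neg_neg]

theorem stmt0_general (S₀ K σ T r : ℝ) (hS : 0 < S₀) (hK : 0 < K) (hσ : 0 < σ) (hT : 0 < T) :
    Real.exp (-(r * T)) *
        ∫ z, max (S₀ * Real.exp (r * T - σ ^ 2 * T / 2 + σ * Real.sqrt T * z) - K) 0
          ∂(gaussianReal 0 1) =
      S₀ * Phi (dBS S₀ K r T σ) -
        K * Real.exp (-(r * T)) * Phi (dBS S₀ K r T σ - σ * Real.sqrt T) := by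
  have hsqrt : 0 < σ * √T := mul_pos hσ (sqrt_pos.2 hT)
  have h_drift : r * T - σ ^ 2 * T / 2 + (σ * √T) ^ 2 / 2 = r * T := by
    rw [mul_pow, sq_sqrt hT.le]
    ring
  have h_d :
      (log (S₀ / K) + (r * T - σ ^ 2 * T / 2)) / (σ * √T) = dBS S₀ K r T σ - σ * √T := by
    rw [dBS, eq_sub_iff_add_eq, div_add' _ _ _ hsqrt.ne']
    congr 1
    linear_combination σ ^ 2 * sq_sqrt hT.le
  have h_discount : exp (-(r * T)) * exp (r * T) = 1 := by
    rw [← exp_add, neg_add_cancel, exp_zero]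
  rw [integral_max_mul_exp_sub_gaussianReal hS hK hsqrt, h_drift, h_d, sub_add_cancel]
  linear_combination S₀ * Phi (dBS S₀ K r T σ) * h_discount

theorem stmt0 (S₀ K σ T r : ℝ) (hS : 0 < S₀) (hK : 0 < K) (hσ : 0 < σ) (hT : 0 < T)
    (hr : 0 ≤ r) :
    Real.exp (-(r * T)) *
        ∫ z, max (S₀ * Real.exp (r * T - σ ^ 2 * T / 2 + σ * Real.sqrt T * z) - K) 0
          ∂(gaussianReal 0 1) =
      S₀ * Phi (dBS S₀ K r T σ) -
        K * Real.exp (-(r * T)) * Phi (dBS S₀ K r T σ - σ * Real.sqrt T) :=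
  stmt0_general S₀ K σ T r hS hK hσ hT
end

section
/- The partial derivative of the Black-Scholes put price with respect to the initial stock price is Φ(d) − 1, where p(x,K,r,T,σ) = c(x,K,r,T,σ) − x + K·e^{−rT} and c is given by the Black-Scholes formula with d = (ln(x/K) + T(r + σ²/2))/(σ√T). -/
open MeasureTheory ProbabilityTheory Real Set

/-!
The call delta is `Φ(d)`: differentiating `x Φ(d) - K e^{-rT} Φ(d - σ√T)` gives
`Φ(d) + ∂ₓd · (x φ(d) - K e^{-rT} φ(d - σ√T))`, and the bracket vanishes because
`φ(d - σ√T) / φ(d) = exp(dσ√T - σ²T/2) = x e^{rT} / K`. Put-call parity then subtracts `1`.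
-/

lemma continuous_phi : Continuous phi := by
  unfold phi
  fun_prop

lemma Phi_eq_integral_add_Phi_zero (x : ℝ) : Phi x = (∫ t in (0 : ℝ)..x, phi t) + Phi 0 := by
  rw [← intervalIntegral.integral_Iic_sub_Iic integrable_phi.integrableOn
    integrable_phi.integrableOn]
  exact (sub_add_cancel _ _).symm

lemma hasDerivAt_Phi (x : ℝ) : HasDerivAt Phi (phi x) x := by
  rw [show Phi = fun y => (∫ t in (0 : ℝ)..y, phi t) + Phi 0 from
    funext Phi_eq_integral_add_Phi_zero]
  exact (continuous_phi.integral_hasStrictDerivAt 0 x).hasDerivAt.add_const _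

lemma hasDerivAt_dBS {x K : ℝ} (r T σ : ℝ) (hx : x ≠ 0) (hK : K ≠ 0) :
    HasDerivAt (fun y => dBS y K r T σ) (1 / (x * (σ * √T))) x := by
  have hlog : HasDerivAt (fun y => Real.log (y / K)) (1 / x) x := by
    convert ((hasDerivAt_id' x).div_const K).log (div_ne_zero hx hK) using 1
    field_simp
  rw [← div_div]
  exact (hlog.add_const _).div_const _

lemma mul_exp_mul_phi_dBS_sub {x K : ℝ} (r : ℝ) {T σ : ℝ} (hx : 0 < x) (hK : 0 < K)
    (hσ : σ ≠ 0) (hT : 0 < T) :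
    K * exp (-(r * T)) * phi (dBS x K r T σ - σ * √T) = x * phi (dBS x K r T σ) := by
  set d := dBS x K r T σ
  have hs : σ * √T ≠ 0 := mul_ne_zero hσ (sqrt_pos.mpr hT).ne'
  have hds : d * (σ * √T) = Real.log (x / K) + T * (r + σ ^ 2 / 2) := div_mul_cancel₀ _ hs
  have hexp : exp (d * (σ * √T) - (σ * √T) ^ 2 / 2) = x / K * exp (r * T) := by
    rw [hds, mul_pow, sq_sqrt hT.le, ← exp_log (div_pos hx hK), ← exp_add, exp_log (div_pos hx hK)]
    ring_nf
  unfold phi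
  rw [show -((d - σ * √T) ^ 2) / 2 = -(d ^ 2) / 2 + (d * (σ * √T) - (σ * √T) ^ 2 / 2) by ring,
    exp_add, hexp, exp_neg]
  field_simp

lemma hasDerivAt_callBS {x K : ℝ} (r : ℝ) {T σ : ℝ} (hx : 0 < x) (hK : 0 < K)
    (hσ : σ ≠ 0) (hT : 0 < T) :
    HasDerivAt (fun y => callBS y K r T σ) (Phi (dBS x K r T σ)) x := by
  have key := mul_exp_mul_phi_dBS_sub r hx hK hσ hT
  set d := dBS x K r T σ
  have hd := hasDerivAt_dBS r T σ hx.ne' hK.ne'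
  have hcall : HasDerivAt (fun y => callBS y K r T σ)
      (1 * Phi d + x * (phi d * (1 / (x * (σ * √T))))
        - K * exp (-(r * T)) * (phi (d - σ * √T) * (1 / (x * (σ * √T))))) x := by
    unfold callBS
    exact ((hasDerivAt_id' x).mul ((hasDerivAt_Phi d).comp x hd)).sub
      (((hasDerivAt_Phi (d - σ * √T)).comp x (hd.sub_const _)).const_mul _)
  refine hcall.congr_deriv ?_
  linear_combination (-(1 / (x * (σ * √T)))) * key

theorem stmt3_general (K σ T r : ℝ) (hK : 0 < K) (hσ : 0 < σ) (hT : 0 < T) :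
    ∀ x : ℝ, 0 < x →
      HasDerivAt (fun y => putBS y K r T σ) (Phi (dBS x K r T σ) - 1) x := by
  intro x hx
  exact ((hasDerivAt_callBS r hx hK hσ.ne' hT).sub (hasDerivAt_id' x)).add_const _

theorem stmt3 (K σ T r : ℝ) (hK : 0 < K) (hσ : 0 < σ) (hT : 0 < T) (hr : 0 ≤ r) :
    ∀ x : ℝ, 0 < x →
      HasDerivAt (fun y => putBS y K r T σ) (Phi (dBS x K r T σ) - 1) x :=
  stmt3_general K σ T r hK hσ hT
end

section
/- The function x ↦ E[(K − x·L)⁺], where L = exp(−σ²T/2 + σ√T·Z) with Z standard normal, is strictly convex on (0,∞), for any K > 0. -/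
open MeasureTheory ProbabilityTheory Real Set

/-!
Pointwise in `z`, the put payoff `x ↦ (K - x L(z))⁺` is convex, as the maximum of an affine
function and `0`, and it is strictly convex across its kink: for `x < y` the convexity inequality
is strict at every `z` with `K / y < L(z) < K / x`. Integrating, the expected payoff is convex, and
strictly so as soon as the law of `L` charges every interval `(s, t) ⊆ (0, ∞)`. A lognormal `L`
has full support `(0, ∞)`, and the Gaussian measure, which dominates Lebesgue measure,
charges every nonempty open set.
-/

theorem convexOn_max_sub_mul_zero (K c : ℝ) :
    ConvexOn ℝ univ (fun x : ℝ => max (K - x * c) 0) := by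
  refine ConvexOn.sup ⟨convex_univ, fun x _ y _ a b _ _ hab => le_of_eq ?_⟩
    (convexOn_const 0 convex_univ)
  simp only [smul_eq_mul]
  linear_combination (-K) * hab

theorem max_sub_mul_zero_lt {K c x y a b : ℝ} (hx : x * c < K) (hy : K < y * c)
    (ha : 0 < a) (hb : 0 < b) (hab : a + b = 1) :
    max (K - (a * x + b * y) * c) 0 < a * max (K - x * c) 0 + b * max (K - y * c) 0 := by
  rw [max_eq_left (sub_pos.2 hx).le, max_eq_right (sub_neg.2 hy).le, max_lt_iff]
  constructor
  · have hK : K = (a + b) * K := by rw [hab, one_mul]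
    nlinarith [mul_pos hb (sub_pos.2 hy)]
  · nlinarith [mul_pos ha (sub_pos.2 hx)]

section Integral

variable {Ω : Type*} [MeasurableSpace Ω] {μ : Measure Ω}

theorem integral_lt_integral_of_ae_le_of_measure_setOf_lt_pos {f g : Ω → ℝ}
    (hf : Integrable f μ) (hg : Integrable g μ) (hle : f ≤ᵐ[μ] g)
    (hlt : 0 < μ {ω | f ω < g ω}) : ∫ ω, f ω ∂μ < ∫ ω, g ω ∂μ := by
  rw [← sub_pos, ← integral_sub hg hf, integral_pos_iff_support_of_nonneg_ae
    (hle.mono fun ω h => sub_nonneg.2 h) (hg.sub hf)]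
  exact hlt.trans_le (measure_mono fun ω h => (sub_pos.2 h).ne')

theorem strictConvexOn_integral {s : Set ℝ} {f : ℝ → Ω → ℝ} (hs : Convex ℝ s)
    (hint : ∀ x ∈ s, Integrable (f x) μ) (hconv : ∀ᵐ ω ∂μ, ConvexOn ℝ s (f · ω))
    (hstrict : ∀ x ∈ s, ∀ y ∈ s, x < y → ∀ a b : ℝ, 0 < a → 0 < b → a + b = 1 →
      0 < μ {ω | f (a * x + b * y) ω < a * f x ω + b * f y ω}) :
    StrictConvexOn ℝ s (fun x => ∫ ω, f x ω ∂μ) := by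
  refine LinearOrder.strictConvexOn_of_lt hs fun x hx y hy hxy a b ha hb hab => ?_
  have hmem : a • x + b • y ∈ s := hs hx hy ha.le hb.le hab
  simp only [smul_eq_mul] at hmem ⊢
  have hax := (hint x hx).const_mul a
  have hby := (hint y hy).const_mul b
  rw [← integral_const_mul, ← integral_const_mul, ← integral_add hax hby]
  exact integral_lt_integral_of_ae_le_of_measure_setOf_lt_pos (hint _ hmem) (hax.add hby)
    (hconv.mono fun ω h => h.2 hx hy ha.le hb.le hab) (hstrict x hx y hy hxy a b ha hb hab)

variable {m : Ω → ℝ} {K : ℝ}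

theorem integrable_max_sub_mul_zero [IsFiniteMeasure μ] (hm : AEStronglyMeasurable m μ)
    (hm0 : ∀ᵐ ω ∂μ, 0 ≤ m ω) {x : ℝ} (hx : 0 ≤ x) :
    Integrable (fun ω => max (K - x * m ω) 0) μ := by
  refine Integrable.mono' (integrable_const (max K 0))
    ((continuous_const.sub (continuous_const.mul continuous_id)).max continuous_const
      |>.comp_aestronglyMeasurable hm) (hm0.mono fun ω hω => ?_)
  rw [Real.norm_of_nonneg (le_max_right _ _)]
  exact max_le_max_right 0 (sub_le_self K (mul_nonneg hx hω))

theorem strictConvexOn_integral_max_sub_mul_zero [IsFiniteMeasure μ] (hK : 0 < K)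
    (hm : AEStronglyMeasurable m μ) (hm0 : ∀ᵐ ω ∂μ, 0 ≤ m ω)
    (hpos : ∀ s t : ℝ, 0 < s → s < t → 0 < μ (m ⁻¹' Ioo s t)) :
    StrictConvexOn ℝ (Ioi 0) (fun x => ∫ ω, max (K - x * m ω) 0 ∂μ) := by
  refine strictConvexOn_integral (convex_Ioi 0)
    (fun x hx => integrable_max_sub_mul_zero hm hm0 (le_of_lt hx))
    (ae_of_all _ fun ω => (convexOn_max_sub_mul_zero K (m ω)).subset (subset_univ _)
      (convex_Ioi 0)) fun x hx y hy hxy a b ha hb hab => ?_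
  refine (hpos _ _ (div_pos hK hy) (div_lt_div_of_pos_left hK hx hxy)).trans_le
    (measure_mono fun ω ⟨hyω, hxω⟩ => max_sub_mul_zero_lt ?_ ?_ ha hb hab)
  · rwa [lt_div_iff₀' (show 0 < x from hx)] at hxω
  · rwa [div_lt_iff₀' (show 0 < y from hy)] at hyω

end Integral

theorem measure_preimage_Ioo_pos {Ω : Type*} [TopologicalSpace Ω] [MeasurableSpace Ω]
    [OpensMeasurableSpace Ω] {μ : Measure Ω} [μ.IsOpenPosMeasure] {m : Ω → ℝ}
    (hm : Continuous m) (hrange : Ioi 0 ⊆ range m) {s t : ℝ} (hs : 0 < s) (hst : s < t) :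
    0 < μ (m ⁻¹' Ioo s t) := by
  obtain ⟨r, hsr, hrt⟩ := exists_between hst
  obtain ⟨ω, rfl⟩ := hrange (hs.trans hsr)
  exact (isOpen_Ioo.preimage hm).measure_pos μ ⟨ω, hsr, hrt⟩

theorem stmt5 (K σ T : ℝ) (hK : 0 < K) (hσ : 0 < σ) (hT : 0 < T) :
    StrictConvexOn ℝ (Set.Ioi (0 : ℝ))
      (fun x : ℝ =>
        ∫ z, max (K - x * Real.exp (-(σ ^ 2 * T) / 2 + σ * Real.sqrt T * z)) 0
          ∂(gaussianReal 0 1)) := by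
  have : (gaussianReal 0 1).IsOpenPosMeasure :=
    (gaussianReal_absolutelyContinuous' 0 one_ne_zero).isOpenPosMeasure
  have hc : σ * √T ≠ 0 := by positivity
  have hrange : Ioi 0 ⊆ range fun z => Real.exp (-(σ ^ 2 * T) / 2 + σ * √T * z) := by
    intro r hr
    refine ⟨(σ ^ 2 * T / 2 + Real.log r) / (σ * √T), ?_⟩
    dsimp only
    rw [mul_div_cancel₀ _ hc, neg_div, neg_add_cancel_left, Real.exp_log hr]
  exact strictConvexOn_integral_max_sub_mul_zero hK (by fun_prop)
    (ae_of_all _ fun z => (Real.exp_pos _).le)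
    fun s t hs hst => measure_preimage_Ioo_pos (by fun_prop) hrange hs hst
end
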